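/- arXiv:1601.02766 — 4 statements merged into one kernel-verified Lean document; each statement's English description precedes it below -/
import Mathlib

section
/- Let G be a connected nonbipartite finite simple graph and let 2k − 1 be the maximum length of an odd cycle of G. Then dstab(I(G)) ≤ υ(G) − ε₀(G) − k + 1. -/
open MvPolynomial

/-- The maximal homogeneous ideal `(x_v : v ∈ V)` of the polynomial ring `K[x_v : v ∈ V]`. -/
noncomputable def maxIdeal (K V : Type*) [Field K] : Ideal (MvPolynomial V K) :=
  Ideal.span (Set.range MvPolynomial.X)

/-- `depthQ K J` is the depth of `R/J` with respect to the maximal homogeneous ideal: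
the supremum of lengths of `R/J`-regular sequences with entries in the maximal
homogeneous ideal. -/
noncomputable def depthQ (K : Type*) {V : Type*} [Field K] (J : Ideal (MvPolynomial V K)) : ℕ :=
  sSup {n : ℕ | ∃ rs : List (MvPolynomial V K), rs.length = n ∧
    (∀ x ∈ rs, x ∈ maxIdeal K V) ∧
    RingTheory.Sequence.IsRegular (MvPolynomial V K ⧸ J) rs}

/-- The index of depth stability of an ideal `J`:
the least `n₀ ≥ 1` such that `depth R/J^n = depth R/J^{n₀}` for all `n ≥ n₀`. -/
noncomputable def dstab (K : Type*) {V : Type*} [Field K] (J : Ideal (MvPolynomial V K)) : ℕ :=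
  sInf {n₀ : ℕ | 1 ≤ n₀ ∧ ∀ n : ℕ, n₀ ≤ n → depthQ K (J ^ n) = depthQ K (J ^ n₀)}

/-- The edge ideal `I(G) = (x_i x_j : {i,j} ∈ E(G))`. -/
noncomputable def edgeIdeal (K : Type*) [Field K] {V : Type*} (G : SimpleGraph V) :
    Ideal (MvPolynomial V K) :=
  Ideal.span {p | ∃ i j, G.Adj i j ∧ p = MvPolynomial.X i * MvPolynomial.X j}

/-- A graph is bipartite if its vertex set can be partitioned into `X` and `Y`
so that every edge joins a vertex of `X` to a vertex of `Y`. -/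
def IsBipartite {V : Type*} (G : SimpleGraph V) : Prop :=
  ∃ X Y : Set V, Disjoint X Y ∧ X ∪ Y = Set.univ ∧
    ∀ ⦃i j⦄, G.Adj i j → (i ∈ X ∧ j ∈ Y) ∨ (i ∈ Y ∧ j ∈ X)

/-- A leaf is a vertex of degree one. -/
def IsLeaf {V : Type*} (G : SimpleGraph V) (v : V) : Prop := (G.neighborSet v).ncard = 1

/-- The set of leaf edges: edges incident with a leaf. -/
def leafEdgeSet {V : Type*} (G : SimpleGraph V) : Set (Sym2 V) :=
  {e ∈ G.edgeSet | ∃ v, v ∈ e ∧ IsLeaf G v}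

/-- `ε₀(G)`: the number of leaf edges. -/
noncomputable def eps0 {V : Type*} (G : SimpleGraph V) : ℕ := (leafEdgeSet G).ncard

/-- `ε(G)`: the number of edges. -/
noncomputable def eps {V : Type*} (G : SimpleGraph V) : ℕ := G.edgeSet.ncard

/-- `G` contains a cycle. -/
def HasCycle {V : Type*} (G : SimpleGraph V) : Prop :=
  ∃ (v : V) (w : G.Walk v v), w.IsCycle

/-- `L` is the maximum length of a cycle of `G`. -/
def IsMaxCycleLength {V : Type*} (G : SimpleGraph V) (L : ℕ) : Prop :=
  (∃ (v : V) (w : G.Walk v v), w.IsCycle ∧ w.length = L) ∧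
  ∀ (v : V) (w : G.Walk v v), w.IsCycle → w.length ≤ L

/-- `L` is the maximum length of an odd cycle of `G`. -/
def IsMaxOddCycleLength {V : Type*} (G : SimpleGraph V) (L : ℕ) : Prop :=
  Odd L ∧ (∃ (v : V) (w : G.Walk v v), w.IsCycle ∧ w.length = L) ∧
  ∀ (v : V) (w : G.Walk v v), w.IsCycle → Odd w.length → w.length ≤ L

/-- A connected graph is unicyclic if it contains exactly one cycle
(all cycles have the same edge set). -/
def IsUnicyclic {V : Type*} (G : SimpleGraph V) : Prop :=
  G.Connected ∧ HasCycle G ∧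
  ∀ (v : V) (w : G.Walk v v) (u : V) (w' : G.Walk u u), w.IsCycle → w'.IsCycle →
    {e | e ∈ w.edges} = {e | e ∈ w'.edges}

/-- An independent set of vertices: no two of its members are adjacent. -/
def IsIndepSet {V : Type*} (G : SimpleGraph V) (S : Finset V) : Prop :=
  ∀ i ∈ S, ∀ j ∈ S, ¬ G.Adj i j

/-- A maximal independent set. -/
def IsMaxIndepSet {V : Type*} (G : SimpleGraph V) (S : Finset V) : Prop :=
  IsIndepSet G S ∧ ∀ T : Finset V, IsIndepSet G T → S ⊆ T → S = T

/-- The number of connected bipartite components of `G`. -/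
noncomputable def numBipartiteComponents {V : Type*} (G : SimpleGraph V) : ℕ :=
  Nat.card {c : G.ConnectedComponent // IsBipartite (SimpleGraph.induce c.supp G)}

/-- A bipartition of `G` given by two finsets. -/
def IsBipartitionF {V : Type*} [Fintype V] [DecidableEq V] (G : SimpleGraph V)
    (X Y : Finset V) : Prop :=
  Disjoint X Y ∧ X ∪ Y = Finset.univ ∧
    ∀ ⦃i j⦄, G.Adj i j → (i ∈ X ∧ j ∈ Y) ∨ (i ∈ Y ∧ j ∈ X)

/-- `μ_G(i)`: the number of non-leaf edges of `G` incident with `i`. -/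
noncomputable def mu {V : Type*} (G : SimpleGraph V) (i : V) : ℕ :=
  {e ∈ G.edgeSet | i ∈ e ∧ e ∉ leafEdgeSet G}.ncard

/-- A monomial ideal: an ideal generated by monomials. -/
def IsMonomialIdeal {K σ : Type*} [Field K] (I : Ideal (MvPolynomial σ K)) : Prop :=
  ∃ S : Set (σ →₀ ℕ), I = Ideal.span ((fun m => MvPolynomial.monomial m (1 : K)) '' S)

/-!
For `n ≥ υ(G) - ε₀(G) - k + 1` the maximal ideal is associated to `R/I(G)^n`, so the depth is
`0` from there on. Starting from an odd cycle of length `2k - 1`, connectivity lets us attach the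
non-leaf vertices off the cycle one at a time by back-and-forth detours, and further detours pad
the result to a closed walk of length `2n - 1` through every non-leaf vertex. The product `u` of
the vertices of this walk has degree `2n - 1`, so `u ∉ I(G)^n`; but every vertex `v` lies on the
walk or is a leaf adjacent to it, and reading the odd closed walk from `v` (or from the neighbour
of the leaf `v`) pairs the factors of `x_v u` into `n` edges, so `x_v u ∈ I(G)^n`.
-/

section Leaves

open SimpleGraph Finset

variable {V : Type*} {G : SimpleGraph V}

lemma not_isLeaf_of_adj_of_adj {x y z : V} (hyz : y ≠ z) (hy : G.Adj x y) (hz : G.Adj x z) :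
    ¬ IsLeaf G x := by
  intro hx
  obtain ⟨j, hj⟩ := Set.ncard_eq_one.mp hx
  have hy' : y ∈ G.neighborSet x := hy
  have hz' : z ∈ G.neighborSet x := hz
  rw [hj, Set.mem_singleton_iff] at hy' hz'
  exact hyz (hy'.trans hz'.symm)

lemma SimpleGraph.Walk.IsCycle.not_isLeaf {a x : V} {c : G.Walk a a} (hc : c.IsCycle)
    (hx : x ∈ c.support) : ¬ IsLeaf G x := by
  intro hleaf
  obtain ⟨j, hj⟩ := Set.ncard_eq_one.mp hleaf
  have := Set.ncard_le_ncard (c.toSubgraph.neighborSet_subset x) (hj ▸ Set.finite_singleton j)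
  rw [hc.ncard_neighborSet_toSubgraph_eq_two hx, hleaf] at this
  omega

lemma SimpleGraph.Walk.IsPath.exists_not_isLeaf_adj_mem {S : Set V} {v b : V} {p : G.Walk v b}
    (hp : p.IsPath) (hv : ¬ IsLeaf G v) (hvS : v ∉ S) (hbS : b ∈ S) :
    ∃ u ∉ S, ¬ IsLeaf G u ∧ ∃ s ∈ S, G.Adj u s := by
  induction p with
  | nil => exact absurd hbS hvS
  | @cons v c b hvc q ih =>
    by_cases hcS : c ∈ S
    · exact ⟨v, hvS, hv, c, hcS, hvc⟩
    cases q with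
    | nil => exact absurd hbS hcS
    | @cons c d b hcd q =>
      have hvd : v ≠ d := by
        rintro rfl
        simp [Walk.cons_isPath_iff] at hp
      exact ih hp.of_cons (not_isLeaf_of_adj_of_adj hvd hvc.symm hcd) hcS hbS

lemma SimpleGraph.Connected.exists_not_isLeaf_adj_mem (hconn : G.Connected) {S : Set V}
    {v b : V} (hv : ¬ IsLeaf G v) (hvS : v ∉ S) (hbS : b ∈ S) :
    ∃ u ∉ S, ¬ IsLeaf G u ∧ ∃ s ∈ S, G.Adj u s := by
  obtain ⟨p, hp⟩ := (hconn.preconnected v b).exists_isPath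
  exact hp.exists_not_isLeaf_adj_mem hv hvS hbS

lemma SimpleGraph.Connected.exists_not_isLeaf_eq_or_adj (hconn : G.Connected) {x : V}
    (hx : ¬ IsLeaf G x) (v : V) : ∃ s, ¬ IsLeaf G s ∧ (v = s ∨ G.Adj v s) := by
  by_cases hv : IsLeaf G v
  · obtain ⟨u, -, hu, _, rfl, huv⟩ :=
      hconn.exists_not_isLeaf_adj_mem (S := {v}) hx (fun h => hx (h ▸ hv)) rfl
    exact ⟨u, hu, Or.inr huv.symm⟩
  · exact ⟨v, hv, Or.inl rfl⟩

variable [Fintype V]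

open Classical in
noncomputable def nonLeaves (G : SimpleGraph V) : Finset V := {v | ¬ IsLeaf G v}

@[simp]
lemma mem_nonLeaves {v : V} : v ∈ nonLeaves G ↔ ¬ IsLeaf G v := by
  simp [nonLeaves]

lemma eps0_add_card_nonLeaves_le : eps0 G + #(nonLeaves G) ≤ Fintype.card V := by
  classical
  set leaves : Finset V := {v | IsLeaf G v}
  have hleafEdges : leafEdgeSet G ⊆ ↑(leaves.biUnion (G.incidenceFinset ·)) := by
    rintro e ⟨he, v, hve, hv⟩
    simpa [leaves] using ⟨v, hv, he, hve⟩
  have hcard : ∀ v ∈ leaves, #(G.incidenceFinset v) = 1 := by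
    intro v hv
    rw [card_incidenceFinset_eq_degree, ← card_neighborSet_eq_degree,
      ← Nat.card_eq_fintype_card, Nat.card_coe_set_eq]
    exact (mem_filter.mp hv).2
  have hsplit : #leaves + #(nonLeaves G) = Fintype.card V := by
    rw [← card_univ, ← card_filter_add_card_filter_not (s := univ) (IsLeaf G)]
    congr 2
  calc eps0 G + #(nonLeaves G)
      ≤ #(leaves.biUnion (G.incidenceFinset ·)) + #(nonLeaves G) := by
        gcongr
        rw [eps0, ← Set.ncard_coe_finset]
        exact Set.ncard_le_ncard hleafEdges (finite_toSet _)
    _ ≤ ∑ v ∈ leaves, #(G.incidenceFinset v) + #(nonLeaves G) := by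
        gcongr
        exact card_biUnion_le
    _ = Fintype.card V := by rw [sum_congr rfl hcard, ← card_eq_sum_ones, hsplit]

end Leaves

section ClosedWalks

open SimpleGraph Finset

variable {V : Type*} [DecidableEq V] {G : SimpleGraph V}

lemma SimpleGraph.Walk.exists_detour {a s u : V} (w : G.Walk a a) (hs : s ∈ w.support)
    (hsu : G.Adj s u) : ∃ w' : G.Walk s s, w'.length = w.length + 2 ∧
      w'.support.toFinset = insert u w.support.toFinset := by
  refine ⟨.cons hsu (.cons hsu.symm (w.rotate s hs)), by simp, ?_⟩
  ext x
  simp only [support_cons, List.toFinset_cons, mem_insert, List.mem_toFinset,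
    mem_support_rotate_iff]
  constructor
  · rintro (rfl | rfl | hx) <;> simp_all
  · tauto

variable [Fintype V]

lemma SimpleGraph.Walk.IsCycle.card_sdiff_support_add_length_le {a : V} {c : G.Walk a a}
    (hc : c.IsCycle) : #(nonLeaves G \ c.support.toFinset) + c.length ≤ #(nonLeaves G) := by
  have hsupp : c.support.toFinset = c.support.tail.toFinset := by
    conv_lhs => rw [← c.cons_tail_support]
    rw [List.toFinset_cons,
      insert_eq_of_mem (List.mem_toFinset.mpr (c.end_mem_tail_support hc.not_nil))]
  have hcard : #c.support.toFinset = c.length := by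
    rw [hsupp, List.toFinset_card_of_nodup hc.support_nodup, List.length_tail, length_support]
    rfl
  rw [← hcard, card_sdiff_add_card_eq_card]
  intro x hx
  exact mem_nonLeaves.mpr (hc.not_isLeaf (List.mem_toFinset.mp hx))

/-- Each step either detours to a new non-leaf vertex or, once all are reached, detours along
an edge already traversed. -/
lemma SimpleGraph.Connected.exists_closed_walk_nonLeaves_subset (hconn : G.Connected) (d : ℕ) :
    ∀ {a : V} (w : G.Walk a a), ¬ w.Nil → #(nonLeaves G \ w.support.toFinset) ≤ d →
      ∃ (b : V) (w' : G.Walk b b), w'.length = w.length + 2 * d ∧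
        nonLeaves G ⊆ w'.support.toFinset := by
  induction d with
  | zero =>
    intro a w _ hw
    exact ⟨a, w, rfl, sdiff_eq_empty_iff_subset.mp (card_eq_zero.mp (Nat.le_zero.mp hw))⟩
  | succ d ih =>
    intro a w hnil hw
    obtain ⟨s, hs, u, hsu, hcard⟩ : ∃ s ∈ w.support, ∃ u, G.Adj s u ∧
        #(nonLeaves G \ insert u w.support.toFinset) ≤ d := by
      rcases (nonLeaves G \ w.support.toFinset).eq_empty_or_nonempty with hempty | ⟨v, hv⟩
      · obtain ⟨c, hac, p, rfl⟩ := Walk.not_nil_iff.mp hnil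
        refine ⟨a, Walk.start_mem_support _, c, hac, ?_⟩
        rw [sdiff_insert, hempty]
        simp
      · rw [mem_sdiff, mem_nonLeaves, List.mem_toFinset] at hv
        obtain ⟨u, hu, hul, s, hs, hsu⟩ :=
          hconn.exists_not_isLeaf_adj_mem (S := {x | x ∈ w.support}) hv.1 hv.2 w.start_mem_support
        refine ⟨s, hs, u, hsu.symm, ?_⟩
        rw [sdiff_insert, card_erase_of_mem (by simpa using ⟨hul, hu⟩)]
        omega
    obtain ⟨w', hlen, hsupp⟩ := w.exists_detour hs hsu
    obtain ⟨b, w'', hlen', hcov⟩ :=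
      ih w' (by rw [← Walk.length_eq_zero_iff, hlen]; omega) (hsupp ▸ hcard)
    exact ⟨b, w'', by rw [hlen', hlen]; ring, hcov⟩

end ClosedWalks

section EdgeIdealPowers

open SimpleGraph

variable {K : Type*} [Field K] {V : Type*} {G : SimpleGraph V}

noncomputable def vertexMonomial (K : Type*) [Field K] {V : Type*} (l : List V) :
    MvPolynomial V K :=
  (l.map X).prod

@[simp]
lemma vertexMonomial_cons (a : V) (l : List V) :
    vertexMonomial K (a :: l) = X a * vertexMonomial K l := by
  simp [vertexMonomial]

lemma List.Perm.vertexMonomial_eq {l l' : List V} (h : l.Perm l') :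
    vertexMonomial K l = vertexMonomial K l' :=
  (h.map X).prod_eq

lemma X_mul_X_mem_edgeIdeal {i j : V} (h : G.Adj i j) :
    (X i * X j : MvPolynomial V K) ∈ edgeIdeal K G :=
  Ideal.subset_span ⟨i, j, h, rfl⟩

lemma vertexMonomial_support_tail_mem_pow : ∀ {m : ℕ} {a b : V} (p : G.Walk a b),
    p.length = 2 * m → vertexMonomial K p.support.tail ∈ edgeIdeal K G ^ m
  | 0, _, _, .nil, _ => by simp [vertexMonomial]
  | m + 1, _, _, .cons hac (.cons hcd q), hp => by
    rw [Walk.support_cons, List.tail_cons, Walk.support_cons, ← q.cons_tail_support,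
      vertexMonomial_cons, vertexMonomial_cons, ← mul_assoc, pow_succ']
    exact Ideal.mul_mem_mul (X_mul_X_mem_edgeIdeal hcd)
      (vertexMonomial_support_tail_mem_pow q (by simp only [Walk.length_cons] at hp; omega))
  | 0, _, _, .cons _ _, hp | m + 1, _, _, .nil, hp | m + 1, _, _, .cons _ .nil, hp => by
    simp only [Walk.length_cons, Walk.length_nil] at hp
    omega

lemma X_mul_vertexMonomial_support_mem_pow {m : ℕ} {u a b : V} (p : G.Walk a b)
    (hp : p.length = 2 * m) (hua : G.Adj u a) :
    X u * vertexMonomial K p.support ∈ edgeIdeal K G ^ (m + 1) := by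
  rw [← p.cons_tail_support, vertexMonomial_cons, ← mul_assoc, pow_succ']
  exact Ideal.mul_mem_mul (X_mul_X_mem_edgeIdeal hua) (vertexMonomial_support_tail_mem_pow p hp)

lemma X_mul_vertexMonomial_support_tail_mem_pow_of_eq_or_adj {m : ℕ} {a v : V}
    (w : G.Walk a a) (hw : w.length = 2 * m + 1) (hv : v = a ∨ G.Adj v a) :
    X v * vertexMonomial K w.support.tail ∈ edgeIdeal K G ^ (m + 1) := by
  cases w with
  | nil => simp at hw
  | cons hac p =>
    have hp : p.length = 2 * m := by simpa using hw
    rw [Walk.support_cons, List.tail_cons]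
    rcases hv with rfl | hva
    · exact X_mul_vertexMonomial_support_mem_pow p hp hac
    · have hperm : p.reverse.support.Perm p.support := by
        rw [Walk.support_reverse]
        exact List.reverse_perm _
      rw [← hperm.vertexMonomial_eq]
      exact X_mul_vertexMonomial_support_mem_pow p.reverse (by simpa using hp) hva

/-- Any vertex of an odd closed walk can serve as its base point. -/
lemma X_mul_vertexMonomial_support_tail_mem_pow [DecidableEq V] {m : ℕ} {a v : V}
    (w : G.Walk a a) (hw : w.length = 2 * m + 1) (hv : ∃ s ∈ w.support, v = s ∨ G.Adj v s) :
    X v * vertexMonomial K w.support.tail ∈ edgeIdeal K G ^ (m + 1) := by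
  obtain ⟨s, hs, hvs⟩ := hv
  rw [← (w.support_rotate s hs).perm.vertexMonomial_eq]
  exact X_mul_vertexMonomial_support_tail_mem_pow_of_eq_or_adj _ (by simpa using hw) hvs

/-- Sending every variable to `t` maps `I(G)^n` into `(t^(2n))`. -/
lemma vertexMonomial_not_mem_pow {n : ℕ} {l : List V} (hl : l.length < 2 * n) :
    vertexMonomial K l ∉ edgeIdeal K G ^ n := by
  let φ : MvPolynomial V K →ₐ[K] Polynomial K := aeval fun _ => Polynomial.X
  have hedge : edgeIdeal K G ≤ (Ideal.span {Polynomial.X ^ 2}).comap φ := by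
    refine Ideal.span_le.mpr ?_
    rintro _ ⟨i, j, -, rfl⟩
    simp [φ, pow_two]
  have hpow : edgeIdeal K G ^ n ≤ (Ideal.span {Polynomial.X ^ (2 * n)}).comap φ := by
    calc edgeIdeal K G ^ n ≤ ((Ideal.span {Polynomial.X ^ 2}).comap φ) ^ n :=
          Ideal.pow_right_mono hedge n
      _ ≤ (Ideal.span {Polynomial.X ^ 2} ^ n).comap φ := Ideal.le_comap_pow _ n
      _ = _ := by rw [Ideal.span_singleton_pow, pow_mul]
  have hφ : φ (vertexMonomial K l) = Polynomial.X ^ l.length := by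
    simp [φ, vertexMonomial, map_list_prod, Function.comp_def]
  intro hmem
  have hdvd := hpow hmem
  rw [Ideal.mem_comap, hφ, Ideal.mem_span_singleton,
    pow_dvd_pow_iff Polynomial.X_ne_zero Polynomial.not_isUnit_X] at hdvd
  omega

end EdgeIdealPowers

section Depth

variable {K : Type*} [Field K] {V : Type*}

/-- A regular element of the maximal ideal would have to kill the class of `u`. -/
lemma depthQ_eq_zero_of_X_mul_mem {J : Ideal (MvPolynomial V K)} (u : MvPolynomial V K)
    (hu : u ∉ J) (hX : ∀ v, X v * u ∈ J) : depthQ K J = 0 := by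
  have hmax : maxIdeal K V ≤ J.colon {u} :=
    Ideal.span_le.mpr (by rintro _ ⟨v, rfl⟩; simpa using hX v)
  refine Nat.le_zero.mp (csSup_le' ?_)
  rintro _ ⟨_ | ⟨x, rs⟩, rfl, hmem, hreg⟩
  · rfl
  · have hx : IsSMulRegular (MvPolynomial V K ⧸ J) x :=
      ((RingTheory.Sequence.isRegular_cons_iff _ _ _).mp hreg).1
    have hxu : x • Ideal.Quotient.mk J u = x • 0 := by
      rw [smul_zero]
      change Ideal.Quotient.mk J (x * u) = 0
      rw [Ideal.Quotient.eq_zero_iff_mem]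
      simpa using Submodule.mem_colon_singleton.mp (hmax (hmem x List.mem_cons_self))
    exact absurd (Ideal.Quotient.eq_zero_iff_mem.mp (hx hxu)) hu

lemma dstab_le_of_depthQ_eq {J : Ideal (MvPolynomial V K)} {n₀ d : ℕ} (hn₀ : 1 ≤ n₀)
    (h : ∀ n ≥ n₀, depthQ K (J ^ n) = d) : dstab K J ≤ n₀ :=
  Nat.sInf_le ⟨hn₀, fun n hn => by rw [h n hn, h n₀ le_rfl]⟩

end Depth

theorem dstab_connected_nonbipartite_le_general (K : Type*) [Field K] {r : ℕ}
    (G : SimpleGraph (Fin r))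
    (hconn : G.Connected) (k : ℕ)
    (hmax : IsMaxOddCycleLength G (2 * k - 1)) :
    (dstab K (edgeIdeal K G) : ℤ) ≤ (r : ℤ) - (eps0 G : ℤ) - (k : ℤ) + 1 := by
  obtain ⟨-, ⟨a, c, hc, hclen⟩, -⟩ := hmax
  have hk : 2 ≤ k := by have := hc.three_le_length; omega
  have hleaves : eps0 G + (nonLeaves G).card ≤ r := by
    simpa using eps0_add_card_nonLeaves_le (G := G)
  have hcycle := hc.card_sdiff_support_add_length_le
  have hdepth : ∀ n ≥ r - eps0 G - k + 1, depthQ K (edgeIdeal K G ^ n) = 0 := by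
    intro n hn
    obtain ⟨_, w, hwlen, hcov⟩ :=
      hconn.exists_closed_walk_nonLeaves_subset (n - k) c hc.not_nil (by omega)
    have hdom : ∀ v, ∃ s ∈ w.support, v = s ∨ G.Adj v s := fun v => by
      obtain ⟨s, hs, hvs⟩ :=
        hconn.exists_not_isLeaf_eq_or_adj (hc.not_isLeaf c.start_mem_support) v
      exact ⟨s, List.mem_toFinset.mp (hcov (mem_nonLeaves.mpr hs)), hvs⟩
    refine depthQ_eq_zero_of_X_mul_mem _
      (vertexMonomial_not_mem_pow (n := n) (l := w.support.tail)
        (by rw [List.length_tail, SimpleGraph.Walk.length_support]; omega)) fun v => ?_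
    have hmem := X_mul_vertexMonomial_support_tail_mem_pow (K := K) (m := n - 1) w (by omega)
      (hdom v)
    rwa [Nat.sub_add_cancel (by omega)] at hmem
  have := dstab_le_of_depthQ_eq (by omega) hdepth
  omega

/-- For a connected nonbipartite graph `G` whose maximum odd
cycle length is `2k − 1`, `dstab(I(G)) ≤ υ(G) − ε₀(G) − k + 1`. -/
theorem dstab_connected_nonbipartite_le (K : Type*) [Field K] {r : ℕ}
    (G : SimpleGraph (Fin r)) (hG : ∀ v, ∃ w, G.Adj v w)
    (hconn : G.Connected) (hnb : ¬ IsBipartite G) (k : ℕ)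
    (hmax : IsMaxOddCycleLength G (2 * k - 1)) :
    (dstab K (edgeIdeal K G) : ℤ) ≤ (r : ℤ) - (eps0 G : ℤ) - (k : ℤ) + 1 :=
  dstab_connected_nonbipartite_le_general K G hconn k hmax
end

section
/- Let G be a bipartite finite simple graph without isolated vertices, let α = (α_1,…,α_r) ∈ ℕ^r, let n ≥ 1, and let F be an independent set of G. Then the monomial x^α = x_1^{α_1}⋯x_r^{α_r} satisfies x^α·(∏_{i∈F} x_i)^k ∉ I(G)^n for every integer k ≥ 0 if and only if there exists a maximal independent set H of G with F ⊆ H and Σ_{i∉H} α_i ≤ n − 1. (In particular, taking F = ∅: x^α ∈ I(G)^n if and only if Σ_{i∉H} α_i ≥ n for every maximal independent set H of G.) -/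
open MvPolynomial

/-!
If `C` is a vertex cover, every generator `x_i x_j` of `I(G)` has degree at least one in the
variables indexed by `C`, so every monomial of `I(G)^n` has degree at least `n` in them. The
complements of maximal independent sets are vertex covers, which gives one direction.

Conversely, for bipartite `G` a weighted König theorem holds: if every vertex cover has
`α`-weight at least `n`, then `n` edges can be chosen so that every vertex `v` lies on at most
`α v` of them, i.e. their product divides `x^α`. It follows from Hall's theorem with deficiency,
applied to the graph in which every vertex `v` is replaced by `α v` copies. Applied to the weight
`α + n · 𝟙_F`, for which covers meeting `F` are heavy automatically while the others contain the
complement of a maximal independent set containing `F`, it gives `x^α (∏_{i ∈ F} x_i)^n ∈ I(G)^n`.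
-/

open Finset

theorem Finset.card_le_card_biUnion_disjSum_univ {ι κ : Type*} [DecidableEq κ]
    {t : ι → Finset κ} {d : ℕ} (h : ∀ s : Finset ι, #s ≤ #(s.biUnion t) + d) (s : Finset ι) :
    #s ≤ #(s.biUnion fun a => (t a).disjSum (univ : Finset (Fin d))) := by
  rcases s.eq_empty_or_nonempty with rfl | ⟨a, ha⟩
  · simp
  calc #s ≤ #((s.biUnion t).disjSum (univ : Finset (Fin d))) := by
        simpa [card_disjSum] using h s
    _ ≤ _ := by
        refine card_le_card fun x hx => ?_
        rcases x with k | i <;> simp only [inl_mem_disjSum, inr_mem_disjSum, mem_biUnion] at hx ⊢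
        exacts [hx, ⟨a, ha, mem_univ i⟩]

theorem Finset.exists_matching_of_forall_card_le_card_biUnion_add {ι κ : Type*} [Fintype ι]
    [DecidableEq κ] (t : ι → Finset κ) (d : ℕ) (h : ∀ s : Finset ι, #s ≤ #(s.biUnion t) + d) :
    ∃ M : Finset (ι × κ), Fintype.card ι ≤ #M + d ∧ Set.InjOn Prod.fst (M : Set (ι × κ)) ∧
      Set.InjOn Prod.snd (M : Set (ι × κ)) ∧ ∀ p ∈ M, p.2 ∈ t p.1 := by
  classical
  -- `d` extra vertices adjacent to everything absorb the deficiency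
  let t' : ι → Finset (κ ⊕ Fin d) := fun a => (t a).disjSum univ
  obtain ⟨g, hg, hgt⟩ :=
    (all_card_le_biUnion_card_iff_exists_injective t').1 (card_le_card_biUnion_disjSum_univ h)
  let M := (univ ×ˢ univ.biUnion t).filter fun p => g p.1 = .inl p.2
  have hM : ∀ p, p ∈ M ↔ g p.1 = .inl p.2 := fun p => by
    refine ⟨fun hp => (mem_filter.1 hp).2, fun hp => mem_filter.2 ⟨?_, hp⟩⟩
    have := hgt p.1
    rw [hp] at this
    simpa using ⟨p.1, by simpa [t'] using this⟩
  refine ⟨M, ?_, ?_, ?_, ?_⟩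
  · have hleft : #(univ.filter fun a => (g a).isLeft) ≤ #M := by
      refine (card_le_card fun a ha => ?_).trans (card_image_le (f := Prod.fst))
      obtain ⟨k, hk⟩ := Sum.isLeft_iff.1 (mem_filter.1 ha).2
      exact mem_image.2 ⟨(a, k), (hM _).2 hk, rfl⟩
    have hright : #(univ.filter fun a => ¬(g a).isLeft) ≤ d := by
      refine (card_le_card_of_injOn g (t := univ.image .inr) (fun a ha => ?_) hg.injOn).trans
        (card_image_le.trans (by simp))
      obtain ⟨i, hi⟩ := Sum.isRight_iff.1 (Sum.not_isLeft.1 (mem_filter.1 ha).2)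
      simp [hi]
    have := card_filter_add_card_filter_not (s := univ) fun a => (g a).isLeft
    rw [card_univ] at this
    omega
  · intro p hp q hq hpq
    have := (hM p).1 hp
    rw [hpq, (hM q).1 hq, Sum.inl.injEq] at this
    exact Prod.ext hpq this.symm
  · intro p hp q hq hpq
    have := (hM p).1 hp
    rw [hpq, ← (hM q).1 hq] at this
    exact Prod.ext (hg this) hpq
  · intro p hp
    simpa [hM p |>.1 hp, t'] using hgt p.1

namespace SimpleGraph

variable {V W : Type*}

/-- A matching of `G` recorded as ordered pairs, no vertex occurring in two of them. -/
structure IsOrientedMatching [DecidableEq W] (G : SimpleGraph W) (M : Finset (W × W)) : Prop where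
  adj : ∀ p ∈ M, G.Adj p.1 p.2
  injOn_fst : Set.InjOn Prod.fst (M : Set (W × W))
  injOn_snd : Set.InjOn Prod.snd (M : Set (W × W))
  disjoint : Disjoint (M.image Prod.fst) (M.image Prod.snd)

theorem IsBipartiteWith.exists_isOrientedMatching_card_eq [Fintype W] [DecidableEq W]
    {G : SimpleGraph W} {s t : Set W} (hG : G.IsBipartiteWith s t) {n : ℕ}
    (hcov : ∀ C : Finset W, G.IsVertexCover (C : Set W) → n ≤ #C) :
    ∃ M, G.IsOrientedMatching M ∧ #M = n := by
  classical
  let X : Finset W := univ.filter (· ∈ s)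
  let nbr : W → Finset W := fun u => univ.filter fun v => u ∈ s ∧ G.Adj u v
  have hall : ∀ S : Finset W, #S ≤ #(S.biUnion nbr) + (Fintype.card W - n) := by
    intro S
    have hC : G.IsVertexCover ↑(S.biUnion nbr ∪ (X \ S)) := by
      intro u v huv
      wlog hu : u ∈ s generalizing u v
      · exact (this huv.symm ((hG.mem_of_adj huv).resolve_left fun h => hu h.1).2).symm
      by_cases huS : u ∈ S
      · exact .inr (mem_union_left _ (mem_biUnion.2 ⟨u, huS, by simp [nbr, hu, huv]⟩))
      · exact .inl (by simp [X, hu, huS])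
    have hcover : n ≤ #(S.biUnion nbr) + #(X \ S) := (hcov _ hC).trans (card_union_le _ _)
    have hdisj : #S + #(X \ S) ≤ Fintype.card W := by
      rw [← card_union_of_disjoint disjoint_sdiff]
      exact card_le_univ _
    omega
  obtain ⟨M, hcard, hfst, hsnd, hM⟩ := exists_matching_of_forall_card_le_card_biUnion_add nbr _ hall
  have hnW : n ≤ Fintype.card W := by simpa using hcov univ (by simp)
  obtain ⟨M', hM'M, hM'⟩ := exists_subset_card_eq (s := M) (n := n) (by omega)
  have hmem : ∀ p ∈ M', p.1 ∈ s ∧ G.Adj p.1 p.2 := fun p hp => by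
    simpa [nbr] using hM p (hM'M hp)
  refine ⟨M', ⟨fun p hp => (hmem p hp).2, hfst.mono hM'M, hsnd.mono hM'M, ?_⟩, hM'⟩
  rw [Finset.disjoint_left]
  simp only [mem_image]
  rintro _ ⟨p, hp, rfl⟩ ⟨q, hq, hqp⟩
  have hq2 : q.2 ∈ t := hG.mem_of_mem_adj (hmem q hq).1 (hmem q hq).2
  exact hG.disjoint.notMem_of_mem_left (hmem p hp).1 (hqp ▸ hq2)

theorem IsBipartiteWith.comap {G : SimpleGraph V} {s t : Set V} (hG : G.IsBipartiteWith s t)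
    (f : W → V) : (G.comap f).IsBipartiteWith (f ⁻¹' s) (f ⁻¹' t) :=
  ⟨hG.disjoint.preimage f, fun _ _ huv => hG.mem_of_adj huv⟩

theorem le_card_of_isVertexCover_comap_sigma [Fintype V] {G : SimpleGraph V} {α : V → ℕ} {n : ℕ}
    (hcov : ∀ C : Finset V, G.IsVertexCover (C : Set V) → n ≤ ∑ v ∈ C, α v)
    (C : Finset (Σ v, Fin (α v)))
    (hC : (G.comap Sigma.fst).IsVertexCover (C : Set (Σ v, Fin (α v)))) : n ≤ #C := by
  classical
  let D : Finset V := univ.filter fun v => ∀ a, ⟨v, a⟩ ∈ C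
  have hD : G.IsVertexCover D := by
    intro v w hvw
    by_contra! h
    simp only [D, coe_filter, mem_univ, true_and, Set.mem_ofPred_eq, not_forall] at h
    obtain ⟨⟨a, ha⟩, b, hb⟩ := h
    exact (hC (v := ⟨v, a⟩) (w := ⟨w, b⟩) hvw).elim ha hb
  calc n ≤ ∑ v ∈ D, α v := hcov D hD
    _ = #(D.sigma fun v => univ) := by simp
    _ ≤ #C := card_le_card fun c hc => by
        obtain ⟨hv, -⟩ := mem_sigma.1 hc
        exact (mem_filter.1 hv).2 c.2

end SimpleGraph

theorem isIndepSet_iff_isIndepSet_coe {V : Type*} {G : SimpleGraph V} {S : Finset V} :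
    IsIndepSet G S ↔ G.IsIndepSet (S : Set V) :=
  ⟨fun h _ hi _ hj _ => h _ hi _ hj, fun h _ hi _ hj hij => h hi hj hij.ne hij⟩

theorem exists_isMaxIndepSet_superset {V : Type*} [Finite V] {G : SimpleGraph V} {S : Finset V}
    (hS : IsIndepSet G S) : ∃ H, IsMaxIndepSet G H ∧ S ⊆ H := by
  obtain ⟨H, hSH, hH⟩ := Finite.exists_le_maximal hS
  exact ⟨H, ⟨hH.prop, fun T hT hHT => hH.eq_of_le hT hHT⟩, hSH⟩

theorem Finset.prod_pow_add_ite {ι M : Type*} [Fintype ι] [DecidableEq ι] [CommMonoid M]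
    (a : ι → M) (α : ι → ℕ) (F : Finset ι) (k : ℕ) :
    ∏ i, a i ^ (α i + if i ∈ F then k else 0) = (∏ i, a i ^ α i) * (∏ i ∈ F, a i) ^ k := by
  simp only [pow_add, prod_mul_distrib, pow_ite, pow_zero, prod_ite_mem, univ_inter, prod_pow]

namespace MvPolynomial

variable {σ R : Type*} [CommSemiring R]

variable (R) in
noncomputable def idealOfDegreeOnGE (C : Finset σ) (m : ℕ) : Ideal (MvPolynomial σ R) :=
  Ideal.span ((fun d => monomial d (1 : R)) '' {d | m ≤ ∑ i ∈ C, d i})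

theorem idealOfDegreeOnGE_mul_le (C : Finset σ) (a b : ℕ) :
    idealOfDegreeOnGE R C a * idealOfDegreeOnGE R C b ≤ idealOfDegreeOnGE R C (a + b) := by
  rw [idealOfDegreeOnGE, idealOfDegreeOnGE, Ideal.span_mul_span']
  refine Ideal.span_mono ?_
  rintro _ ⟨_, ⟨d, hd, rfl⟩, _, ⟨e, he, rfl⟩, rfl⟩
  refine ⟨d + e, ?_, by simp [monomial_mul]⟩
  simpa [sum_add_distrib] using add_le_add hd he

theorem pow_le_idealOfDegreeOnGE {C : Finset σ} {I : Ideal (MvPolynomial σ R)}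
    (hI : I ≤ idealOfDegreeOnGE R C 1) (n : ℕ) : I ^ n ≤ idealOfDegreeOnGE R C n := by
  induction n with
  | zero =>
    rw [pow_zero, Ideal.one_eq_top, top_le_iff, Ideal.eq_top_iff_one]
    exact Ideal.subset_span ⟨0, by simp, by simp⟩
  | succ n ih => exact (Ideal.mul_mono ih hI).trans (idealOfDegreeOnGE_mul_le C n 1)

theorem le_sum_of_monomial_mem_idealOfDegreeOnGE [Nontrivial R] {C : Finset σ} {m : ℕ}
    {β : σ →₀ ℕ} (h : monomial β (1 : R) ∈ idealOfDegreeOnGE R C m) : m ≤ ∑ i ∈ C, β i := by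
  obtain ⟨d, hd, hdβ⟩ := mem_ideal_span_monomial_image.1 h β (by classical simp [support_monomial])
  exact hd.trans (sum_le_sum fun i _ => hdβ i)

theorem prod_X_pow_eq_monomial_equivFunOnFinite [Fintype σ] (β : σ → ℕ) :
    ∏ i, (X i : MvPolynomial σ R) ^ β i = monomial (Finsupp.equivFunOnFinite.symm β) 1 := by
  rw [monomial_eq, C_1, one_mul, Finsupp.prod_fintype _ _ fun _ => pow_zero _]
  rfl

end MvPolynomial

open MvPolynomial

section EdgeIdeal

variable {K V : Type*} [Field K] {G : SimpleGraph V}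

theorem edgeIdeal_le_idealOfDegreeOnGE {C : Finset V}
    (hC : G.IsVertexCover (C : Set V)) : edgeIdeal K G ≤ idealOfDegreeOnGE K C 1 := by
  classical
  refine Ideal.span_le.2 ?_
  rintro _ ⟨i, j, hij, rfl⟩
  refine Ideal.subset_span
    ⟨Finsupp.single i 1 + Finsupp.single j 1, ?_, by simp [X, monomial_mul]⟩
  rcases hC hij with h | h <;> simp [sum_add_distrib, Finsupp.single_apply, mem_coe.1 h]

theorem le_sum_of_prod_X_pow_mem_edgeIdeal_pow [Fintype V] {C : Finset V}
    (hC : G.IsVertexCover (C : Set V)) {α : V → ℕ} {n : ℕ}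
    (h : ∏ v, (X v : MvPolynomial V K) ^ α v ∈ edgeIdeal K G ^ n) : n ≤ ∑ v ∈ C, α v := by
  rw [prod_X_pow_eq_monomial_equivFunOnFinite] at h
  exact le_sum_of_monomial_mem_idealOfDegreeOnGE
    (pow_le_idealOfDegreeOnGE (edgeIdeal_le_idealOfDegreeOnGE hC) n h)

theorem prod_X_pow_mem_edgeIdeal_pow_of_isOrientedMatching [Fintype V] [DecidableEq V]
    {α : V → ℕ} {M : Finset ((Σ v, Fin (α v)) × (Σ v, Fin (α v)))}
    (hM : (G.comap Sigma.fst).IsOrientedMatching M) :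
    ∏ v, (X v : MvPolynomial V K) ^ α v ∈ edgeIdeal K G ^ #M := by
  have hedges : ∏ p ∈ M, (X p.1.1 * X p.2.1 : MvPolynomial V K) ∈ edgeIdeal K G ^ #M := by
    rw [← prod_const]
    exact Ideal.prod_mem_prod fun p hp => Ideal.subset_span ⟨_, _, hM.adj p hp, rfl⟩
  refine Ideal.mem_of_dvd _ ?_ hedges
  calc ∏ p ∈ M, (X p.1.1 * X p.2.1 : MvPolynomial V K)
      = ∏ c ∈ M.image Prod.fst ∪ M.image Prod.snd, X c.1 := by
        rw [prod_union hM.disjoint, prod_image hM.injOn_fst, prod_image hM.injOn_snd,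
          prod_mul_distrib]
    _ ∣ ∏ c : Σ v, Fin (α v), X c.1 := prod_dvd_prod_of_subset _ _ _ (subset_univ _)
    _ = ∏ v, X v ^ α v := by simp [Fintype.prod_sigma]

theorem SimpleGraph.IsBipartiteWith.prod_X_pow_mem_edgeIdeal_pow [Fintype V] {s t : Set V}
    (hG : G.IsBipartiteWith s t) {α : V → ℕ} {n : ℕ}
    (hcov : ∀ C : Finset V, G.IsVertexCover (C : Set V) → n ≤ ∑ v ∈ C, α v) :
    ∏ v, (X v : MvPolynomial V K) ^ α v ∈ edgeIdeal K G ^ n := by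
  classical
  obtain ⟨M, hM, rfl⟩ := (hG.comap Sigma.fst).exists_isOrientedMatching_card_eq
    (SimpleGraph.le_card_of_isVertexCover_comap_sigma hcov)
  exact prod_X_pow_mem_edgeIdeal_pow_of_isOrientedMatching hM

end EdgeIdeal

theorem le_sum_add_ite_of_isVertexCover {V : Type*} [Fintype V] [DecidableEq V]
    {G : SimpleGraph V} {α : V → ℕ} {n : ℕ} {F : Finset V}
    (hH : ∀ H, IsMaxIndepSet G H → F ⊆ H → n ≤ ∑ i ∈ Hᶜ, α i) {C : Finset V}
    (hC : G.IsVertexCover (C : Set V)) : n ≤ ∑ i ∈ C, (α i + if i ∈ F then n else 0) := by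
  by_cases hFC : F ⊆ Cᶜ
  · have hCc : IsIndepSet G Cᶜ := by
      rwa [isIndepSet_iff_isIndepSet_coe, coe_compl, ← SimpleGraph.isVertexCover_compl,
        compl_compl]
    obtain ⟨H, hH', hCH⟩ := exists_isMaxIndepSet_superset hCc
    calc n ≤ ∑ i ∈ Hᶜ, α i := hH H hH' (hFC.trans hCH)
      _ ≤ ∑ i ∈ C, α i := sum_le_sum_of_subset (compl_le_iff_compl_le.1 hCH)
      _ ≤ _ := sum_le_sum fun _ _ => Nat.le_add_right _ _
  · obtain ⟨i, hiF, hiC⟩ := not_subset.1 hFC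
    calc n ≤ α i + if i ∈ F then n else 0 := by simp [hiF]
      _ ≤ _ := single_le_sum (f := fun j => α j + if j ∈ F then n else 0)
          (fun _ _ => Nat.zero_le _) (notMem_compl.1 hiC)

theorem mem_power_edgeIdeal_bipartite_iff_general (K : Type*) [Field K] {r : ℕ}
    (G : SimpleGraph (Fin r))
    (hb : IsBipartite G) (α : Fin r → ℕ) (n : ℕ) (hn : 1 ≤ n)
    (F : Finset (Fin r)) :
    (∀ k : ℕ,
      (∏ i, (MvPolynomial.X i : MvPolynomial (Fin r) K) ^ α i) *
          (∏ i ∈ F, (MvPolynomial.X i : MvPolynomial (Fin r) K)) ^ k ∉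
        edgeIdeal K G ^ n) ↔
    ∃ H : Finset (Fin r), IsMaxIndepSet G H ∧ F ⊆ H ∧ ∑ i ∈ Hᶜ, α i ≤ n - 1 := by
  obtain ⟨X, Y, hXY, -, hadj⟩ := hb
  have hG : G.IsBipartiteWith X Y := ⟨hXY, hadj⟩
  simp_rw [← prod_pow_add_ite]
  constructor
  · intro hnot
    by_contra! hH
    exact hnot n <| hG.prod_X_pow_mem_edgeIdeal_pow fun C hC =>
      le_sum_add_ite_of_isVertexCover (fun H hH' hFH => by have := hH H hH' hFH; omega) hC
  · rintro ⟨H, hH, hFH, hsum⟩ k hk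
    have hHc : G.IsVertexCover ↑Hᶜ := by
      rw [coe_compl, SimpleGraph.isVertexCover_compl, ← isIndepSet_iff_isIndepSet_coe]
      exact hH.1
    have hsumk : ∑ i ∈ Hᶜ, (α i + if i ∈ F then k else 0) = ∑ i ∈ Hᶜ, α i :=
      sum_congr rfl fun i hi => by rw [if_neg fun hiF => mem_compl.1 hi (hFH hiF), add_zero]
    have := le_sum_of_prod_X_pow_mem_edgeIdeal_pow hHc hk
    omega

/-- For a bipartite graph `G`, `α ∈ ℕ^r`, `n ≥ 1` and an
independent set `F`: `x^α · (∏_{i∈F} x_i)^k ∉ I(G)^n` for every `k ≥ 0` iff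
there is a maximal independent set `H ⊇ F` with `Σ_{i∉H} α_i ≤ n − 1`. -/
theorem mem_power_edgeIdeal_bipartite_iff (K : Type*) [Field K] {r : ℕ}
    (G : SimpleGraph (Fin r)) (hG : ∀ v, ∃ w, G.Adj v w)
    (hb : IsBipartite G) (α : Fin r → ℕ) (n : ℕ) (hn : 1 ≤ n)
    (F : Finset (Fin r)) (hF : IsIndepSet G F) :
    (∀ k : ℕ,
      (∏ i, (MvPolynomial.X i : MvPolynomial (Fin r) K) ^ α i) *
          (∏ i ∈ F, (MvPolynomial.X i : MvPolynomial (Fin r) K)) ^ k ∉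
        edgeIdeal K G ^ n) ↔
    ∃ H : Finset (Fin r), IsMaxIndepSet G H ∧ F ⊆ H ∧ ∑ i ∈ Hᶜ, α i ≤ n - 1 :=
  mem_power_edgeIdeal_bipartite_iff_general K G hb α n hn F
end

section
/- Let G be a connected bipartite finite simple graph with bipartition (X, Y), for each vertex i let μ_G(i) be the number of non-leaf edges of G incident with i, and set n := ε(G) − ε₀(G) + 1. Then Σ_{i∈X} μ_G(i) = Σ_{i∈Y} μ_G(i) = ε(G) − ε₀(G) = n − 1, and every maximal independent set F of G different from X and Y satisfies Σ_{i∉F} μ_G(i) ≥ n. -/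
open MvPolynomial

/-!
Each side of the bipartition meets every edge in exactly one endpoint, so double counting the
incidences between vertices and non-leaf edges gives `Σ_{i∈X} μ(i) = Σ_{i∈Y} μ(i) = ε − ε₀`.
An independent set `F` leaves at least one endpoint of every edge outside, so `Σ_{i∉F} μ(i) ≥ ε − ε₀`,
with strict inequality as soon as some non-leaf edge misses `F` entirely. If no such edge existed,
maximality would force the leaf of every leaf edge with a vertex outside `F` into `F`, so every
edge would have exactly one endpoint in `F`; in a connected graph this makes `F` a side of the
bipartition.
-/

open Finset

section NonLeafEdges

variable {V : Type*} [Finite V] (G : SimpleGraph V)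

noncomputable def nonLeafEdgeFinset : Finset (Sym2 V) :=
  (Set.toFinite (G.edgeSet \ leafEdgeSet G)).toFinset

variable {G} in
theorem mem_nonLeafEdgeFinset {e : Sym2 V} :
    e ∈ nonLeafEdgeFinset G ↔ e ∈ G.edgeSet ∧ e ∉ leafEdgeSet G := by
  rw [nonLeafEdgeFinset, Set.Finite.mem_toFinset, Set.mem_sdiff]

theorem card_nonLeafEdgeFinset : #(nonLeafEdgeFinset G) = eps G - eps0 G := by
  rw [nonLeafEdgeFinset, ← Set.ncard_coe_finset, Set.Finite.coe_toFinset, eps, eps0,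
    Set.ncard_sdiff fun _ he => he.1]

variable [DecidableEq V]

theorem mu_eq_card_filter_mem (i : V) : mu G i = #{e ∈ nonLeafEdgeFinset G | i ∈ e} := by
  rw [mu, ← Set.ncard_coe_finset]
  congr 1
  ext e
  simp only [coe_filter, mem_nonLeafEdgeFinset, Set.mem_ofPred_eq]
  tauto

theorem sum_mu_eq_sum_card_filter_mem (S : Finset V) :
    ∑ i ∈ S, mu G i = ∑ e ∈ nonLeafEdgeFinset G, #{i ∈ S | i ∈ e} := by
  simp only [mu_eq_card_filter_mem, card_filter]
  exact sum_comm

end NonLeafEdges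

section Sym2

variable {V : Type*} [DecidableEq V] {S : Finset V} {a b : V}

theorem card_filter_mem_mk_of_mem_of_notMem (ha : a ∈ S) (hb : b ∉ S) :
    #{i ∈ S | i ∈ s(a, b)} = 1 := by
  simp [Sym2.mem_iff, filter_or, filter_eq', ha, hb]

theorem card_filter_mem_mk_of_mem_of_mem (hab : a ≠ b) (ha : a ∈ S) (hb : b ∈ S) :
    #{i ∈ S | i ∈ s(a, b)} = 2 := by
  simp [Sym2.mem_iff, filter_or, filter_eq', ha, hb, card_pair hab]

end Sym2

section

variable {V : Type*} [DecidableEq V] {G : SimpleGraph V}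

theorem IsMaxIndepSet.mem_of_isLeaf {F : Finset V} (hF : IsMaxIndepSet G F) {a b : V}
    (hab : G.Adj a b) (hb : IsLeaf G b) (ha : a ∉ F) : b ∈ F := by
  obtain ⟨c, hc⟩ := Set.ncard_eq_one.1 hb
  have hnbr : ∀ {d}, G.Adj b d → d = a := fun {d} hbd => by
    have hd : d ∈ G.neighborSet b := hbd
    have ha' : a ∈ G.neighborSet b := hab.symm
    rw [hc, Set.mem_singleton_iff] at hd ha'
    rw [hd, ha']
  by_contra hbF
  have hind : IsIndepSet G (insert b F) := by
    intro i hi j hj hij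
    rw [mem_insert] at hi hj
    rcases hi with rfl | hi <;> rcases hj with rfl | hj
    · exact G.irrefl hij
    · exact ha (hnbr hij ▸ hj)
    · exact ha (hnbr hij.symm ▸ hi)
    · exact hF.1 i hi j hj hij
  exact hbF (hF.2 _ hind (subset_insert b F) ▸ mem_insert_self b F)

end

namespace IsBipartitionF

variable {V : Type*} [Fintype V] [DecidableEq V] {G : SimpleGraph V} {X Y : Finset V}

theorem symm (h : IsBipartitionF G X Y) : IsBipartitionF G Y X :=
  ⟨h.1.symm, union_comm X Y ▸ h.2.1, fun _ _ hab => (h.2.2 hab).symm⟩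

theorem compl_eq (h : IsBipartitionF G X Y) : Xᶜ = Y := by
  rw [compl_eq_univ_sdiff, ← h.2.1, union_sdiff_left, sdiff_eq_self_of_disjoint h.1.symm]

theorem mem_iff_notMem_of_adj (h : IsBipartitionF G X Y) {a b : V} (hab : G.Adj a b) :
    a ∈ X ↔ b ∉ X := by
  have hY : ∀ v, v ∈ Y ↔ v ∉ X := fun v => by rw [← h.compl_eq, mem_compl]
  rcases h.2.2 hab with ⟨ha, hb⟩ | ⟨ha, hb⟩ <;> simp_all

end IsBipartitionF

section

variable {V : Type*} [Fintype V] [DecidableEq V] {G : SimpleGraph V}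

theorem SimpleGraph.Connected.eq_or_eq_compl_of_forall_adj (hG : G.Connected) {S T : Finset V}
    (hS : ∀ ⦃a b⦄, G.Adj a b → (a ∈ S ↔ b ∉ S)) (hT : ∀ ⦃a b⦄, G.Adj a b → (a ∈ T ↔ b ∉ T)) :
    S = T ∨ S = Tᶜ := by
  have hwalk : ∀ {u v} (_ : G.Walk u v), (u ∈ S ↔ u ∈ T) ↔ (v ∈ S ↔ v ∈ T) := by
    intro u v w
    induction w with
    | nil => rfl
    | cons hadj _ ih =>
      have := hS hadj
      have := hT hadj
      exact Iff.trans (by tauto) ih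
  obtain ⟨u⟩ := hG.nonempty
  by_cases hu : u ∈ S ↔ u ∈ T
  · exact .inl <| ext fun v => (hG.preconnected u v).elim fun w => (hwalk w).1 hu
  · refine .inr <| ext fun v => ?_
    have := (hG.preconnected u v).elim hwalk
    rw [mem_compl]
    tauto

theorem sum_mu_eq_of_forall_adj {S : Finset V} (hS : ∀ ⦃a b⦄, G.Adj a b → (a ∈ S ↔ b ∉ S)) :
    ∑ i ∈ S, mu G i = eps G - eps0 G := by
  rw [sum_mu_eq_sum_card_filter_mem, ← card_nonLeafEdgeFinset, card_eq_sum_ones]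
  refine sum_congr rfl fun e he => ?_
  induction e using Sym2.ind with
  | _ a b =>
  have hab : G.Adj a b := (mem_nonLeafEdgeFinset.1 he).1
  by_cases ha : a ∈ S
  · exact card_filter_mem_mk_of_mem_of_notMem ha ((hS hab).1 ha)
  · rw [Sym2.eq_swap]
    exact card_filter_mem_mk_of_mem_of_notMem (not_not.1 (mt (hS hab).2 ha)) ha

theorem IsMaxIndepSet.exists_nonLeaf_adj_notMem (hconn : G.Connected) {X Y : Finset V}
    (hXY : IsBipartitionF G X Y) {F : Finset V} (hF : IsMaxIndepSet G F) (hFX : F ≠ X)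
    (hFY : F ≠ Y) : ∃ a b, G.Adj a b ∧ s(a, b) ∉ leafEdgeSet G ∧ a ∉ F ∧ b ∉ F := by
  by_contra! hcon
  have hsep : ∀ ⦃a b⦄, G.Adj a b → (a ∈ F ↔ b ∉ F) := by
    intro a b hab
    refine ⟨fun ha hb => hF.1 a ha b hb hab, fun hb => ?_⟩
    by_contra ha
    by_cases hleaf : s(a, b) ∈ leafEdgeSet G
    · obtain ⟨-, v, hv, hvleaf⟩ := hleaf
      rcases Sym2.mem_iff.1 hv with rfl | rfl
      · exact ha (hF.mem_of_isLeaf hab.symm hvleaf hb)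
      · exact hb (hF.mem_of_isLeaf hab hvleaf ha)
    · exact hb (hcon a b hab hleaf ha)
  rcases hconn.eq_or_eq_compl_of_forall_adj hsep fun _ _ => hXY.mem_iff_notMem_of_adj with h | h
  · exact hFX h
  · exact hFY (h.trans hXY.compl_eq)

theorem lt_sum_mu_compl {F : Finset V} (hF : IsIndepSet G F) {a b : V} (hab : G.Adj a b)
    (hleaf : s(a, b) ∉ leafEdgeSet G) (ha : a ∉ F) (hb : b ∉ F) :
    eps G - eps0 G < ∑ i ∈ Fᶜ, mu G i := by
  rw [sum_mu_eq_sum_card_filter_mem, ← card_nonLeafEdgeFinset, card_eq_sum_ones]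
  refine sum_lt_sum (fun e he => ?_) ⟨s(a, b), mem_nonLeafEdgeFinset.2 ⟨hab, hleaf⟩, ?_⟩
  · induction e using Sym2.ind with
    | _ c d =>
    have hcd : G.Adj c d := (mem_nonLeafEdgeFinset.1 he).1
    rw [one_le_card]
    by_cases hc : c ∈ F
    · exact ⟨d, mem_filter.2 ⟨mem_compl.2 fun hd => hF c hc d hd hcd, Sym2.mem_mk_right c d⟩⟩
    · exact ⟨c, mem_filter.2 ⟨mem_compl.2 hc, Sym2.mem_mk_left c d⟩⟩
  · rw [card_filter_mem_mk_of_mem_of_mem hab.ne (mem_compl.2 ha) (mem_compl.2 hb)]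
    norm_num

end

theorem mu_sums_bipartition_general {r : ℕ}
    (G : SimpleGraph (Fin r))
    (hconn : G.Connected) (X Y : Finset (Fin r)) (hXY : IsBipartitionF G X Y) :
    ∑ i ∈ X, mu G i = eps G - eps0 G ∧
    ∑ i ∈ Y, mu G i = eps G - eps0 G ∧
    ∀ F : Finset (Fin r), IsMaxIndepSet G F → F ≠ X → F ≠ Y →
      eps G - eps0 G + 1 ≤ ∑ i ∈ Fᶜ, mu G i := by
  refine ⟨sum_mu_eq_of_forall_adj fun _ _ => hXY.mem_iff_notMem_of_adj,
    sum_mu_eq_of_forall_adj fun _ _ => hXY.symm.mem_iff_notMem_of_adj, fun F hF hFX hFY => ?_⟩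
  obtain ⟨a, b, hab, hleaf, ha, hb⟩ := hF.exists_nonLeaf_adj_notMem hconn hXY hFX hFY
  exact lt_sum_mu_compl hF.1 hab hleaf ha hb

/-- For a connected bipartite graph `G` with bipartition
`(X, Y)`, with `μ_G(i)` the number of non-leaf edges incident with `i` and
`n := ε(G) − ε₀(G) + 1`: `Σ_{i∈X} μ_G(i) = Σ_{i∈Y} μ_G(i) = ε(G) − ε₀(G)`, and
every maximal independent set `F ∉ {X, Y}` satisfies `Σ_{i∉F} μ_G(i) ≥ n`. -/
theorem mu_sums_bipartition {r : ℕ}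
    (G : SimpleGraph (Fin r)) (hG : ∀ v, ∃ w, G.Adj v w)
    (hconn : G.Connected) (X Y : Finset (Fin r)) (hXY : IsBipartitionF G X Y) :
    ∑ i ∈ X, mu G i = eps G - eps0 G ∧
    ∑ i ∈ Y, mu G i = eps G - eps0 G ∧
    ∀ F : Finset (Fin r), IsMaxIndepSet G F → F ≠ X → F ≠ Y →
      eps G - eps0 G + 1 ≤ ∑ i ∈ Fᶜ, mu G i :=
  mu_sums_bipartition_general G hconn X Y hXY
end

section
/- Let G be a bipartite finite simple graph without isolated vertices with r vertices, let p be a leaf of G and q the unique neighbor of p. Given α = (α_1,…,α_r) ∈ ℕ^r, define β ∈ ℕ^r by β_i = α_i + 1 if i = p or i = q, and β_i = α_i otherwise. Then for every maximal independent set F of G, Σ_{i∉F} β_i = Σ_{i∉F} α_i + 1; consequently, for every n ≥ 1, a maximal independent set F satisfies Σ_{i∉F} α_i ≤ n − 1 if and only if it satisfies Σ_{i∉F} β_i ≤ n. -/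
open MvPolynomial

/-!
A maximal independent set `F` contains exactly one of the leaf `p` and its neighbour `q`: not
both, as they are adjacent, and at least one, since otherwise `p` could be added to `F`. Hence
`Fᶜ` meets `{p, q}` in exactly one vertex, and passing from `α` to `β` adds exactly `1` to the
sum over `Fᶜ`.
-/

theorem IsMaxIndepSet.exists_adj_mem_of_notMem {V : Type*} [DecidableEq V] {G : SimpleGraph V}
    {F : Finset V} (hF : IsMaxIndepSet G F) {v : V} (hv : v ∉ F) : ∃ w ∈ F, G.Adj v w := by
  by_contra! hfree
  have hind : IsIndepSet G (insert v F) := by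
    simp only [IsIndepSet, Finset.mem_insert]
    rintro i (rfl | hi) j (rfl | hj) hij
    · exact G.loopless.irrefl _ hij
    · exact hfree j hj hij
    · exact hfree i hi hij.symm
    · exact hF.1 i hi j hj hij
  exact hv (hF.2 _ hind (Finset.subset_insert v F) ▸ Finset.mem_insert_self v F)

theorem IsMaxIndepSet.mem_iff_notMem_of_neighborSet_eq {V : Type*} [DecidableEq V]
    {G : SimpleGraph V} {F : Finset V} (hF : IsMaxIndepSet G F) {p q : V}
    (hpq : G.neighborSet p = {q}) : p ∈ F ↔ q ∉ F := by
  have hadj : G.Adj p q := (Set.ext_iff.mp hpq q).mpr rfl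
  refine ⟨fun hp hq => hF.1 p hp q hq hadj, fun hq => ?_⟩
  by_contra hp
  obtain ⟨w, hw, hpw⟩ := hF.exists_adj_mem_of_notMem hp
  have hwq : w = q := (Set.ext_iff.mp hpq w).mp hpw
  exact hq (hwq ▸ hw)

theorem Finset.sum_ite_or_add_one {ι : Type*} [DecidableEq ι] {S : Finset ι} {p q : ι}
    (hS : p ∈ S ↔ q ∉ S) (f : ι → ℕ) :
    ∑ i ∈ S, (if i = p ∨ i = q then f i + 1 else f i) = ∑ i ∈ S, f i + 1 := by
  have hsplit : ∀ i, (if i = p ∨ i = q then f i + 1 else f i) =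
      f i + if i = p ∨ i = q then 1 else 0 := fun i => by split_ifs <;> rfl
  rw [Finset.sum_congr rfl fun i _ => hsplit i, Finset.sum_add_distrib, Finset.sum_boole,
    Finset.filter_or, Finset.filter_eq', Finset.filter_eq']
  by_cases hp : p ∈ S
  · simp [hp, hS.mp hp]
  · simp [hp, not_not.mp (mt hS.mpr hp)]

theorem leaf_shift_maximal_indep_general {r : ℕ}
    (G : SimpleGraph (Fin r))
    (p q : Fin r) (hpq : G.neighborSet p = {q})
    (α β : Fin r → ℕ) (hβ : ∀ i, β i = if i = p ∨ i = q then α i + 1 else α i) :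
    (∀ F : Finset (Fin r), IsMaxIndepSet G F →
      ∑ i ∈ Fᶜ, β i = ∑ i ∈ Fᶜ, α i + 1) ∧
    ∀ n : ℕ, 1 ≤ n → ∀ F : Finset (Fin r), IsMaxIndepSet G F →
      (∑ i ∈ Fᶜ, α i ≤ n - 1 ↔ ∑ i ∈ Fᶜ, β i ≤ n) := by
  have hsum : ∀ F : Finset (Fin r), IsMaxIndepSet G F →
      ∑ i ∈ Fᶜ, β i = ∑ i ∈ Fᶜ, α i + 1 := by
    intro F hF
    have hcompl : p ∈ Fᶜ ↔ q ∉ Fᶜ := by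
      simpa only [Finset.mem_compl, not_not, not_iff_comm] using
        (hF.mem_iff_notMem_of_neighborSet_eq hpq).symm
    simp only [hβ]
    exact Finset.sum_ite_or_add_one hcompl α
  refine ⟨hsum, fun n hn F hF => ?_⟩
  rw [hsum F hF]
  omega

/-- Let `p` be a leaf of a bipartite graph `G` with unique
neighbor `q`, and let `β` be obtained from `α` by adding `1` at `p` and `q`.
Then `Σ_{i∉F} β_i = Σ_{i∉F} α_i + 1` for every maximal independent set `F`;
consequently, for `n ≥ 1`, `Σ_{i∉F} α_i ≤ n − 1 ↔ Σ_{i∉F} β_i ≤ n`. -/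
theorem leaf_shift_maximal_indep {r : ℕ}
    (G : SimpleGraph (Fin r)) (hG : ∀ v, ∃ w, G.Adj v w) (hb : IsBipartite G)
    (p q : Fin r) (hpq : G.neighborSet p = {q})
    (α β : Fin r → ℕ) (hβ : ∀ i, β i = if i = p ∨ i = q then α i + 1 else α i) :
    (∀ F : Finset (Fin r), IsMaxIndepSet G F →
      ∑ i ∈ Fᶜ, β i = ∑ i ∈ Fᶜ, α i + 1) ∧
    ∀ n : ℕ, 1 ≤ n → ∀ F : Finset (Fin r), IsMaxIndepSet G F →
      (∑ i ∈ Fᶜ, α i ≤ n - 1 ↔ ∑ i ∈ Fᶜ, β i ≤ n) :=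
  leaf_shift_maximal_indep_general G p q hpq α β hβ
end
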